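/- arXiv:2312.10830 — 3 statements merged into one kernel-verified Lean document; each statement's English description precedes it below -/
import Mathlib

section
/- Let C be a hereditary class of graphs and let G be a graph. Then the following are equivalent: (a) G belongs to G_C; (b) for every induced subgraph H of G, every minimal separator S of H satisfies H[S] ∈ C; (c) for every induced subgraph H of G, every minimal cutset K of H satisfies H[K] ∈ C. -/
/-!
(a) ⇔ (b): a minimal `(a,b)`-separator `S` of `G[s]` extends to a minimal `(a,b)`-separator of
`G` containing `S` (shrink `S ∪ (V ∖ s)`), so `G[S]` is an induced subgraph of a graph in `C`.
(b) ⇒ (c): a minimal cutset is a minimal separator for any two vertices it separates.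
(c) ⇒ (b): if `S` is a minimal `(a,b)`-separator of `H` and `A`, `B` are the components of
`H - S` containing `a` and `b`, every vertex of `S` has a neighbour in `A` and one in `B`, so `S`
is a minimal cutset of `H[A ∪ B ∪ S]`.
-/

open SimpleGraph

namespace PaperSep

variable {V : Type} {W : Type}

/-- There is a walk from `a` to `b` in `G` all of whose vertices avoid the set `S`. -/
def ConnAvoid (G : SimpleGraph V) (S : Set V) (a b : V) : Prop :=
  ∃ p : G.Walk a b, ∀ v ∈ p.support, v ∉ S

/-- `S` is an `(a,b)`-separator of `G`. -/
def IsSep (G : SimpleGraph V) (a b : V) (S : Set V) : Prop :=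
  a ∉ S ∧ b ∉ S ∧ ¬ ConnAvoid G S a b

/-- `S` is a minimal `(a,b)`-separator of `G`. -/
def IsMinSep (G : SimpleGraph V) (a b : V) (S : Set V) : Prop :=
  IsSep G a b S ∧ ∀ T ⊂ S, ¬ IsSep G a b T

/-- `S` is a minimal separator of `G`. -/
def IsMinimalSeparator (G : SimpleGraph V) (S : Set V) : Prop :=
  ∃ a b : V, a ≠ b ∧ ¬ G.Adj a b ∧ IsMinSep G a b S

/-- `K` is a cutset of `G`, i.e. `G − K` is disconnected. -/
def IsCutset (G : SimpleGraph V) (K : Set V) : Prop :=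
  ∃ a b : V, a ∉ K ∧ b ∉ K ∧ ¬ ConnAvoid G K a b

/-- `K` is a minimal cutset of `G`. -/
def IsMinimalCutset (G : SimpleGraph V) (K : Set V) : Prop :=
  IsCutset G K ∧ ∀ T ⊂ K, ¬ IsCutset G T

/-- A class of finite graphs. -/
def GraphClass : Type 1 :=
  ∀ (α : Type) [Finite α], SimpleGraph α → Prop

/-- A class is hereditary if it is closed under isomorphism and induced subgraphs. -/
def Hereditary (C : GraphClass) : Prop :=
  ∀ (α : Type) [Finite α] (G : SimpleGraph α) (β : Type) [Finite β] (H : SimpleGraph β)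
    (s : Set α), Nonempty (H ≃g G.induce s) → C α G → C β H

/-- `G ∈ 𝒢_C` : every minimal separator of `G` induces a graph in `C`. -/
def MemGC (C : GraphClass) {α : Type} [Finite α] (G : SimpleGraph α) : Prop :=
  ∀ S : Set α, IsMinimalSeparator G S → C ↥S (G.induce S)

/-- The class `𝒢_C`. -/
def GCclass (C : GraphClass) : GraphClass :=
  fun α inst G => @MemGC C α inst G

/-- `S` is a union of `k` (possibly empty) cliques of `G`. -/
def UnionOfCliques (G : SimpleGraph V) (k : ℕ) (S : Set V) : Prop :=
  ∃ f : Fin k → Set V, (∀ i, G.IsClique (f i)) ∧ S = ⋃ i, f i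

/-- `G ∈ 𝒢_k` : every minimal separator of `G` is a union of `k` cliques. -/
def MemGk (k : ℕ) (G : SimpleGraph V) : Prop :=
  ∀ S : Set V, IsMinimalSeparator G S → UnionOfCliques G k S

/-- The class `𝒢_k`. -/
def Gkclass (k : ℕ) : GraphClass := fun _ _ G => MemGk k G

/-- The class `𝒞_k` of graphs whose vertex set is a union of `k` cliques. -/
def Ckclass (k : ℕ) : GraphClass := fun _ _ G => UnionOfCliques G k Set.univ

/-- An induced minor model of `H` in `G`. -/
def IsIMModel (G : SimpleGraph V) (H : SimpleGraph W) (X : W → Set V) : Prop :=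
  (∀ w, (X w).Nonempty) ∧
  (∀ u w : W, u ≠ w → Disjoint (X u) (X w)) ∧
  (∀ w, (G.induce (X w)).Connected) ∧
  (∀ u w : W, u ≠ w → (H.Adj u w ↔ ∃ a ∈ X u, ∃ b ∈ X w, G.Adj a b))

/-- `H` is an induced minor of `G`. -/
def IsInducedMinor (H : SimpleGraph W) (G : SimpleGraph V) : Prop :=
  ∃ X : W → Set V, IsIMModel G H X

/-- The class `C` is closed under induced minors. -/
def IMClosed (C : GraphClass) : Prop :=
  ∀ (α : Type) [Finite α] (G : SimpleGraph α) (β : Type) [Finite β] (H : SimpleGraph β),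
    C α G → IsInducedMinor H G → C β H

/-- The class `C` is closed under the addition of edges. -/
def EdgeAddClosed (C : GraphClass) : Prop :=
  ∀ (α : Type) [Finite α] (G : SimpleGraph α) (a b : α), a ≠ b → ¬ G.Adj a b →
    C α G → C α (G ⊔ SimpleGraph.edge a b)

/-- `G ∈ ℳ_C` : `G ∉ C` but every proper induced minor of `G` is in `C`.
(For finite graphs, the proper induced minors of `G` are exactly the induced minors of `G`
not isomorphic to `G`.) -/
def MemMC (C : GraphClass) {α : Type} [Finite α] (G : SimpleGraph α) : Prop :=
  ¬ C α G ∧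
  ∀ (β : Type) [Finite β] (H : SimpleGraph β),
    IsInducedMinor H G → IsEmpty (H ≃g G) → C β H

/-- The complete join of two graphs. -/
def join (G : SimpleGraph V) (H : SimpleGraph W) : SimpleGraph (V ⊕ W) :=
  SimpleGraph.fromRel (fun x y =>
    match x, y with
    | Sum.inl a, Sum.inl b => G.Adj a b
    | Sum.inr a, Sum.inr b => H.Adj a b
    | _, _ => True)

/-- The class `C` is closed under the addition of universal vertices (up to isomorphism). -/
def UnivAddClosed (C : GraphClass) : Prop :=
  ∀ (α : Type) [Finite α] (G : SimpleGraph α) (β : Type) [Finite β] (H : SimpleGraph β),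
    C α G → Nonempty (H ≃g join (⊥ : SimpleGraph (Fin 1)) G) → C β H

/-- `G` has a universal vertex. -/
def HasUniversalVertex (G : SimpleGraph V) : Prop :=
  ∃ v : V, ∀ w : V, w ≠ v → G.Adj v w



/-- `G` is a theta: two nonadjacent vertices joined by three internally disjoint induced
paths of length at least two, with no other vertices or edges
(equivalently, a subdivision of `K_{2,3}`). -/
def IsTheta (G : SimpleGraph V) : Prop :=
  ∃ (a b : V) (P₁ P₂ P₃ : G.Walk a b),
    a ≠ b ∧
    P₁.IsPath ∧ P₂.IsPath ∧ P₃.IsPath ∧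
    2 ≤ P₁.length ∧ 2 ≤ P₂.length ∧ 2 ≤ P₃.length ∧
    (∀ v : V, v ∈ P₁.support → v ∈ P₂.support → v = a ∨ v = b) ∧
    (∀ v : V, v ∈ P₁.support → v ∈ P₃.support → v = a ∨ v = b) ∧
    (∀ v : V, v ∈ P₂.support → v ∈ P₃.support → v = a ∨ v = b) ∧
    (∀ v : V, v ∈ P₁.support ∨ v ∈ P₂.support ∨ v ∈ P₃.support) ∧
    (∀ u v : V, G.Adj u v ↔
      s(u, v) ∈ P₁.edges ∨ s(u, v) ∈ P₂.edges ∨ s(u, v) ∈ P₃.edges)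

/-- `G` is a pyramid: an apex `a` joined to a triangle `b₁b₂b₃` by three paths sharing only
`a`, at least two of which have length at least two, with no other vertices or edges. -/
def IsPyramid (G : SimpleGraph V) : Prop :=
  ∃ (a b₁ b₂ b₃ : V) (P₁ : G.Walk a b₁) (P₂ : G.Walk a b₂) (P₃ : G.Walk a b₃),
    G.Adj b₁ b₂ ∧ G.Adj b₁ b₃ ∧ G.Adj b₂ b₃ ∧
    P₁.IsPath ∧ P₂.IsPath ∧ P₃.IsPath ∧
    1 ≤ P₁.length ∧ 1 ≤ P₂.length ∧ 1 ≤ P₃.length ∧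
    ((2 ≤ P₁.length ∧ 2 ≤ P₂.length) ∨ (2 ≤ P₁.length ∧ 2 ≤ P₃.length) ∨
      (2 ≤ P₂.length ∧ 2 ≤ P₃.length)) ∧
    (∀ v : V, v ∈ P₁.support → v ∈ P₂.support → v = a) ∧
    (∀ v : V, v ∈ P₁.support → v ∈ P₃.support → v = a) ∧
    (∀ v : V, v ∈ P₂.support → v ∈ P₃.support → v = a) ∧
    (∀ v : V, v ∈ P₁.support ∨ v ∈ P₂.support ∨ v ∈ P₃.support) ∧
    (∀ u v : V, G.Adj u v ↔
      s(u, v) ∈ P₁.edges ∨ s(u, v) ∈ P₂.edges ∨ s(u, v) ∈ P₃.edges ∨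
      s(u, v) = s(b₁, b₂) ∨ s(u, v) = s(b₁, b₃) ∨ s(u, v) = s(b₂, b₃))

/-- `G` is a prism: two disjoint triangles joined by three pairwise disjoint paths, with no
other vertices or edges. -/
def IsPrism (G : SimpleGraph V) : Prop :=
  ∃ (a₁ a₂ a₃ b₁ b₂ b₃ : V) (P₁ : G.Walk a₁ b₁) (P₂ : G.Walk a₂ b₂) (P₃ : G.Walk a₃ b₃),
    G.Adj a₁ a₂ ∧ G.Adj a₁ a₃ ∧ G.Adj a₂ a₃ ∧
    G.Adj b₁ b₂ ∧ G.Adj b₁ b₃ ∧ G.Adj b₂ b₃ ∧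
    P₁.IsPath ∧ P₂.IsPath ∧ P₃.IsPath ∧
    1 ≤ P₁.length ∧ 1 ≤ P₂.length ∧ 1 ≤ P₃.length ∧
    (∀ v : V, v ∈ P₁.support → v ∈ P₂.support → False) ∧
    (∀ v : V, v ∈ P₁.support → v ∈ P₃.support → False) ∧
    (∀ v : V, v ∈ P₂.support → v ∈ P₃.support → False) ∧
    (∀ v : V, v ∈ P₁.support ∨ v ∈ P₂.support ∨ v ∈ P₃.support) ∧
    (∀ u v : V, G.Adj u v ↔
      s(u, v) ∈ P₁.edges ∨ s(u, v) ∈ P₂.edges ∨ s(u, v) ∈ P₃.edges ∨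
      s(u, v) = s(a₁, a₂) ∨ s(u, v) = s(a₁, a₃) ∨ s(u, v) = s(a₂, a₃) ∨
      s(u, v) = s(b₁, b₂) ∨ s(u, v) = s(b₁, b₃) ∨ s(u, v) = s(b₂, b₃))

/-- `G` is a long prism: a prism other than the complement of `C₆`, i.e. a prism in which at
least one of the three paths has length at least two. -/
def IsLongPrism (G : SimpleGraph V) : Prop :=
  ∃ (a₁ a₂ a₃ b₁ b₂ b₃ : V) (P₁ : G.Walk a₁ b₁) (P₂ : G.Walk a₂ b₂) (P₃ : G.Walk a₃ b₃),
    G.Adj a₁ a₂ ∧ G.Adj a₁ a₃ ∧ G.Adj a₂ a₃ ∧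
    G.Adj b₁ b₂ ∧ G.Adj b₁ b₃ ∧ G.Adj b₂ b₃ ∧
    P₁.IsPath ∧ P₂.IsPath ∧ P₃.IsPath ∧
    1 ≤ P₁.length ∧ 1 ≤ P₂.length ∧ 1 ≤ P₃.length ∧
    (2 ≤ P₁.length ∨ 2 ≤ P₂.length ∨ 2 ≤ P₃.length) ∧
    (∀ v : V, v ∈ P₁.support → v ∈ P₂.support → False) ∧
    (∀ v : V, v ∈ P₁.support → v ∈ P₃.support → False) ∧
    (∀ v : V, v ∈ P₂.support → v ∈ P₃.support → False) ∧
    (∀ v : V, v ∈ P₁.support ∨ v ∈ P₂.support ∨ v ∈ P₃.support) ∧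
    (∀ u v : V, G.Adj u v ↔
      s(u, v) ∈ P₁.edges ∨ s(u, v) ∈ P₂.edges ∨ s(u, v) ∈ P₃.edges ∨
      s(u, v) = s(a₁, a₂) ∨ s(u, v) = s(a₁, a₃) ∨ s(u, v) = s(a₂, a₃) ∨
      s(u, v) = s(b₁, b₂) ∨ s(u, v) = s(b₁, b₃) ∨ s(u, v) = s(b₂, b₃))

/-- `G` is a wheel: a hole (chordless cycle of length at least four) together with one
additional vertex having at least three neighbors on the hole. -/
def IsWheel (G : SimpleGraph V) : Prop :=
  ∃ (v x : V) (c : G.Walk x x),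
    c.IsCycle ∧ 4 ≤ c.length ∧ v ∉ c.support ∧
    (∀ u : V, u = v ∨ u ∈ c.support) ∧
    (∀ u w : V, u ∈ c.support → w ∈ c.support → G.Adj u w → s(u, w) ∈ c.edges) ∧
    3 ≤ {u : V | u ∈ c.support ∧ G.Adj v u}.ncard

/-- `G` is a broken wheel: a wheel in which the neighbors of the additional vertex induce a
disconnected subgraph of the hole. -/
def IsBrokenWheel (G : SimpleGraph V) : Prop :=
  ∃ (v x : V) (c : G.Walk x x),
    c.IsCycle ∧ 4 ≤ c.length ∧ v ∉ c.support ∧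
    (∀ u : V, u = v ∨ u ∈ c.support) ∧
    (∀ u w : V, u ∈ c.support → w ∈ c.support → G.Adj u w → s(u, w) ∈ c.edges) ∧
    3 ≤ {u : V | u ∈ c.support ∧ G.Adj v u}.ncard ∧
    ¬ (G.induce {u : V | u ∈ c.support ∧ G.Adj v u}).Connected

/-- `G` is diamond-free: it has no induced subgraph isomorphic to `K₄` minus an edge. -/
def DiamondFree (G : SimpleGraph V) : Prop :=
  ¬ ∃ a b c d : V, c ≠ d ∧ G.Adj a b ∧ G.Adj a c ∧ G.Adj a d ∧ G.Adj b c ∧ G.Adj b d ∧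
    ¬ G.Adj c d

/-- The short `n`-prism: two `n`-vertex cliques joined by a perfect matching. -/
def completePrism (n : ℕ) : SimpleGraph (Fin n ⊕ Fin n) :=
  SimpleGraph.fromRel (fun x y =>
    match x, y with
    | Sum.inl _, Sum.inl _ => True
    | Sum.inr _, Sum.inr _ => True
    | Sum.inl i, Sum.inr j => i = j
    | Sum.inr i, Sum.inl j => i = j)

/-- `G` is a complete prism, i.e. a short `n`-prism for some `n ≥ 3`. -/
def IsCompletePrism (G : SimpleGraph V) : Prop :=
  ∃ n : ℕ, 3 ≤ n ∧ Nonempty (G ≃g completePrism n)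

/-- `G` is a cycle. -/
def IsCycleGraph (G : SimpleGraph V) : Prop :=
  ∃ n : ℕ, 3 ≤ n ∧ Nonempty (G ≃g cycleGraph n)

/-- `G` is a complete graph. -/
def IsCompleteGraph (G : SimpleGraph V) : Prop :=
  ∀ u v : V, u ≠ v → G.Adj u v

/-- `G` has a clique-cutset. -/
def HasCliqueCutset (G : SimpleGraph V) : Prop :=
  ∃ K : Set V, G.IsClique K ∧ IsCutset G K

section ConnAvoid

variable {G : SimpleGraph V} {S T : Set V} {a b c : V}

theorem connAvoid_refl (ha : a ∉ S) : ConnAvoid G S a a :=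
  ⟨.nil, by simpa using ha⟩

theorem connAvoid_of_adj (h : G.Adj a b) (ha : a ∉ S) (hb : b ∉ S) : ConnAvoid G S a b :=
  ⟨h.toWalk, by simp [ha, hb]⟩

theorem ConnAvoid.symm : ConnAvoid G S a b → ConnAvoid G S b a := fun ⟨p, hp⟩ =>
  ⟨p.reverse, fun v hv => hp v (by simpa using hv)⟩

theorem ConnAvoid.trans : ConnAvoid G S a b → ConnAvoid G S b c → ConnAvoid G S a c :=
  fun ⟨p, hp⟩ ⟨q, hq⟩ => ⟨p.append q, fun v hv =>
    (Walk.mem_support_append_iff p q).1 hv |>.elim (hp v) (hq v)⟩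

theorem ConnAvoid.mono (h : ConnAvoid G S a b) (hTS : T ⊆ S) : ConnAvoid G T a b :=
  let ⟨p, hp⟩ := h
  ⟨p, fun v hv hvT => hp v hv (hTS hvT)⟩

theorem ConnAvoid.left_notMem (h : ConnAvoid G S a b) : a ∉ S :=
  let ⟨p, hp⟩ := h
  hp a p.start_mem_support

theorem ConnAvoid.right_notMem (h : ConnAvoid G S a b) : b ∉ S :=
  h.symm.left_notMem

theorem ConnAvoid.avoid_unreachable (h : ConnAvoid G S a b) :
    ConnAvoid G (S ∪ {x | ¬ ConnAvoid G S a x}) a b := by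
  classical
  obtain ⟨p, hp⟩ := h
  refine ⟨p, fun v hv hvS => hvS.elim (hp v hv) fun hva => hva ?_⟩
  exact ⟨p.takeUntil v hv, fun u hu => hp u (p.support_takeUntil_subset_support hv hu)⟩

theorem connAvoid_induce_iff {s : Set V} {T : Set s} {a b : s} :
    ConnAvoid (G.induce s) T a b ↔ ConnAvoid G (Subtype.val '' T ∪ sᶜ) a b := by
  constructor
  · rintro ⟨p, hp⟩
    refine ⟨p.map (Embedding.induce s).toHom, fun v hv hvT => ?_⟩
    obtain ⟨u, hu, rfl⟩ := List.mem_map.1 ((Walk.support_map _ _) ▸ hv)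
    rcases hvT with ⟨w, hwT, hw⟩ | hvs
    · exact hp u hu (Subtype.val_injective hw ▸ hwT)
    · exact hvs u.2
  · rintro ⟨p, hp⟩
    have hs : ∀ v ∈ p.support, v ∈ s := fun v hv => not_not.1 fun h => hp v hv (Or.inr h)
    refine ⟨p.induce s hs, fun v hv hvT => ?_⟩
    rw [Walk.support_induce, List.mem_attachWith] at hv
    exact hp v hv (Or.inl ⟨v, hvT, rfl⟩)

theorem ConnAvoid.map {H : SimpleGraph W} (f : G ↪g H) (h : ConnAvoid G S a b) :
    ConnAvoid H (f '' S) (f a) (f b) := by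
  obtain ⟨p, hp⟩ := h
  refine ⟨p.map f.toHom, fun v hv hvS => ?_⟩
  obtain ⟨u, hu, rfl⟩ := List.mem_map.1 ((Walk.support_map _ _) ▸ hv)
  exact hp u hu (f.injective.mem_set_image.1 hvS)

end ConnAvoid

section Separators

variable {G : SimpleGraph V} {S : Set V} {a b v : V}

theorem isMinSep_iff_minimal : IsMinSep G a b S ↔ Minimal (IsSep G a b) S :=
  Set.minimal_iff_forall_ssubset.symm

theorem isMinimalCutset_iff_minimal : IsMinimalCutset G S ↔ Minimal (IsCutset G) S :=
  Set.minimal_iff_forall_ssubset.symm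

theorem IsSep.symm (h : IsSep G a b S) : IsSep G b a S :=
  ⟨h.2.1, h.1, fun hba => h.2.2 hba.symm⟩

theorem IsMinSep.symm (h : IsMinSep G a b S) : IsMinSep G b a S :=
  ⟨h.1.symm, fun T hT hTsep => h.2 T hT hTsep.symm⟩

theorem IsMinSep.connAvoid_diff_singleton (h : IsMinSep G a b S) (hv : v ∈ S) :
    ConnAvoid G (S \ {v}) a b := by
  by_contra hab
  exact h.2 _ (Set.sdiff_singleton_ssubset.2 hv)
    ⟨fun ha => h.1.1 ha.1, fun hb => h.1.2.1 hb.1, hab⟩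

theorem IsMinSep.exists_adj (h : IsMinSep G a b S) (hv : v ∈ S) :
    ∃ x, ConnAvoid G S a x ∧ G.Adj x v := by
  obtain ⟨p, hp⟩ := h.connAvoid_diff_singleton hv
  obtain ⟨d, hd, hda, hdb⟩ :=
    p.exists_boundary_dart {x | ConnAvoid G S a x} (connAvoid_refl h.1.1) h.1.2.2
  have hsnd : d.snd ∉ S \ {v} := hp _ (p.dart_snd_mem_support_of_mem_darts hd)
  have hsndS : d.snd ∈ S := by_contra fun hS => hdb (hda.trans (connAvoid_of_adj d.adj
    hda.right_notMem hS))
  obtain rfl : d.snd = v := by simpa [hsndS] using hsnd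
  exact ⟨d.fst, hda, d.adj⟩

theorem IsMinimalCutset.isMinimalSeparator (h : IsMinimalCutset G S) : IsMinimalSeparator G S := by
  obtain ⟨⟨a, b, ha, hb, hab⟩, hmin⟩ := h
  refine ⟨a, b, ?_, fun hadj => hab (connAvoid_of_adj hadj ha hb), ⟨ha, hb, hab⟩,
    fun T hT hTsep => hmin T hT ⟨a, b, hTsep⟩⟩
  rintro rfl
  exact hab (connAvoid_refl ha)

end Separators

theorem _root_.Minimal.image_equiv {α β : Type*} {P : Set α → Prop} {Q : Set β → Prop}
    {S : Set α} (e : α ≃ β) (hPQ : ∀ T, Q (e '' T) ↔ P T) (h : Minimal P S) :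
    Minimal Q (e '' S) := by
  rw [Set.minimal_iff_forall_ssubset] at h ⊢
  refine ⟨(hPQ S).2 h.1, fun T hT hQ => h.2 (t := e.symm '' T) ?_ ((hPQ _).1 ?_)⟩
  · simpa using e.symm.toOrderIsoSet.lt_iff_lt.2 hT
  · rwa [e.image_symm_image]

section IsoTransfer

variable {G : SimpleGraph V} {H : SimpleGraph W} {S : Set V} {a b : V}

theorem IsSep.image_iso (e : G ≃g H) (h : IsSep G a b S) : IsSep H (e a) (e b) (e '' S) := by
  obtain ⟨ha, hb, hab⟩ := h
  refine ⟨by simpa using ha, by simpa using hb, fun hab' => hab ?_⟩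
  simpa [Set.image_image] using hab'.map e.symm.toEmbedding

theorem IsCutset.image_iso (e : G ≃g H) (h : IsCutset G S) : IsCutset H (e '' S) :=
  let ⟨a, b, hsep⟩ := h
  ⟨e a, e b, IsSep.image_iso e hsep⟩

theorem IsMinimalSeparator.image_iso (e : G ≃g H) (h : IsMinimalSeparator G S) :
    IsMinimalSeparator H (e '' S) := by
  obtain ⟨a, b, hab, hadj, hmin⟩ := h
  refine ⟨e a, e b, by simpa using hab, by simpa [e.map_adj_iff] using hadj, ?_⟩
  refine isMinSep_iff_minimal.2 <| .image_equiv e.toEquiv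
    (fun T => ⟨fun hT => ?_, fun hT => ?_⟩) (isMinSep_iff_minimal.1 hmin)
  · simpa [Set.image_image] using hT.image_iso e.symm
  · exact hT.image_iso e

theorem IsMinimalCutset.image_iso (e : G ≃g H) (h : IsMinimalCutset G S) :
    IsMinimalCutset H (e '' S) := by
  refine isMinimalCutset_iff_minimal.2 <| .image_equiv e.toEquiv
    (fun T => ⟨fun hT => ?_, fun hT => ?_⟩) (isMinimalCutset_iff_minimal.1 h)
  · simpa [Set.image_image] using hT.image_iso e.symm
  · exact hT.image_iso e

end IsoTransfer

section Induce

variable {G : SimpleGraph V}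

noncomputable def induceInduceIso {s : Set V} {T : Set s} {X : Set V} (h : Subtype.val '' T = X) :
    (G.induce s).induce T ≃g G.induce X where
  toEquiv := (Equiv.Set.image Subtype.val T Subtype.val_injective).trans (Equiv.setCongr h)
  map_rel_iff' := Iff.rfl

@[simp]
theorem coe_induceInduceIso {s : Set V} {T : Set s} {X : Set V} (h : Subtype.val '' T = X)
    (x : T) : (induceInduceIso (G := G) h x : V) = x := rfl

theorem IsMinimalSeparator.exists_subset_of_induce [Finite V] {s : Set V} {S : Set s}
    (h : IsMinimalSeparator (G.induce s) S) :
    ∃ S', IsMinimalSeparator G S' ∧ Subtype.val '' S ⊆ S' := by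
  obtain ⟨a, b, hab, hadj, hmin⟩ := h
  have hsep : IsSep G a b (Subtype.val '' S ∪ sᶜ) := by
    refine ⟨?_, ?_, fun hab' => hmin.1.2.2 (connAvoid_induce_iff.2 hab')⟩ <;>
      simp [Subtype.val_injective.mem_set_image, hmin.1.1, hmin.1.2.1]
  obtain ⟨S', hS's, hS'⟩ := exists_minimal_le_of_wellFoundedLT (IsSep G a b) _ hsep
  refine ⟨S', ⟨a, b, Subtype.val_injective.ne hab, hadj, isMinSep_iff_minimal.2 hS'⟩, ?_⟩
  rintro _ ⟨v, hv, rfl⟩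
  by_contra hvS'
  refine hS'.prop.2.2 ((connAvoid_induce_iff.1 (hmin.connAvoid_diff_singleton hv)).mono ?_)
  intro x hx
  rcases hS's hx with ⟨u, hu, rfl⟩ | hxs
  · exact Or.inl ⟨u, ⟨hu, fun huv => hvS' (Set.mem_singleton_iff.1 huv ▸ hx)⟩, rfl⟩
  · exact Or.inr hxs

theorem IsMinSep.connAvoid_of_connAvoid_or_mem {S R : Set V} {a b z : V} (h : IsMinSep G a b S)
    (hR : R ⊆ S ∪ {x | ¬ ConnAvoid G S a x}) (hz : ConnAvoid G S a z ∨ z ∈ S \ R) :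
    ConnAvoid G R a z := by
  rcases hz with hz | ⟨hzS, hzR⟩
  · exact hz.avoid_unreachable.mono hR
  · obtain ⟨x, hax, hxz⟩ := h.exists_adj hzS
    have hax' := hax.avoid_unreachable.mono hR
    exact hax'.trans (connAvoid_of_adj hxz hax'.right_notMem hzR)

theorem IsMinimalSeparator.exists_isMinimalCutset_induce {S : Set V}
    (h : IsMinimalSeparator G S) :
    ∃ U, S ⊆ U ∧ IsMinimalCutset (G.induce U) (Subtype.val ⁻¹' S) := by
  obtain ⟨a, b, -, -, h⟩ := h
  set A := {x | ConnAvoid G S a x}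
  set B := {x | ConnAvoid G S b x}
  set U := A ∪ B ∪ S
  have haU : a ∈ U := Or.inl (Or.inl (connAvoid_refl h.1.1))
  have hbU : b ∈ U := Or.inl (Or.inr (connAvoid_refl h.1.2.1))
  have hSU : S ⊆ U := Set.subset_union_right
  refine ⟨U, hSU, ⟨⟨a, haU⟩, ⟨b, hbU⟩, h.1.1, h.1.2.1, fun hab => h.1.2.2 ?_⟩, ?_⟩
  · exact (connAvoid_induce_iff.1 hab).mono fun x hx => Or.inl ⟨⟨x, hSU hx⟩, hx, rfl⟩
  rintro T hT ⟨x, y, hx, hy, hxy⟩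
  set R := Subtype.val '' T ∪ Uᶜ
  have hR : ∀ z : U, z ∉ T → z.val ∉ R := by
    rintro z hzT (hzR | hzR)
    · exact hzT (Subtype.val_injective.mem_set_image.1 hzR)
    · exact hzR z.2
  have hRa : R ⊆ S ∪ {x | ¬ ConnAvoid G S a x} := by
    rintro _ (⟨z, hz, rfl⟩ | hz)
    exacts [Or.inl (hT.subset hz), Or.inr fun hza => hz (Or.inl (Or.inl hza))]
  have hRb : R ⊆ S ∪ {x | ¬ ConnAvoid G S b x} := by
    rintro _ (⟨z, hz, rfl⟩ | hz)
    exacts [Or.inl (hT.subset hz), Or.inr fun hzb => hz (Or.inl (Or.inr hzb))]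
  -- a vertex of `S \ T` links the component of `a` to that of `b`
  obtain ⟨v, hvS, hvT⟩ := Set.exists_of_ssubset hT
  have hbv := h.symm.connAvoid_of_connAvoid_or_mem hRb (Or.inr ⟨hvS, hR v hvT⟩)
  have hav := h.connAvoid_of_connAvoid_or_mem hRa (Or.inr ⟨hvS, hR v hvT⟩)
  have key : ∀ z : U, z ∉ T → ConnAvoid G R a z := by
    rintro ⟨z, (hz | hz) | hz⟩ hzT
    · exact h.connAvoid_of_connAvoid_or_mem hRa (Or.inl hz)
    · exact hav.trans (hbv.symm.trans (h.symm.connAvoid_of_connAvoid_or_mem hRb (Or.inl hz)))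
    · exact h.connAvoid_of_connAvoid_or_mem hRa (Or.inr ⟨hz, hR _ hzT⟩)
  exact hxy (connAvoid_induce_iff.2 ((key x hx).symm.trans (key y hy)))

end Induce

section Hereditary

variable {C : GraphClass}

theorem Hereditary.of_iso (hC : Hereditary C) {α β : Type} [Finite α] [Finite β]
    {G : SimpleGraph α} {H : SimpleGraph β} (e : H ≃g G) (h : C α G) : C β H :=
  hC α G β H Set.univ ⟨e.trans (induceUnivIso G).symm⟩ h

theorem Hereditary.induce_mono (hC : Hereditary C) [Finite V] {G : SimpleGraph V} {X Y : Set V}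
    (hXY : X ⊆ Y) (h : C Y (G.induce Y)) : C X (G.induce X) :=
  have hX : Subtype.val '' (Subtype.val ⁻¹' X : Set Y) = X :=
    (Subtype.image_preimage_coe Y X).trans (Set.inter_eq_right.2 hXY)
  hC Y (G.induce Y) X (G.induce X) (Subtype.val ⁻¹' X) ⟨(induceInduceIso hX).symm⟩ h

end Hereditary

/-- Proposition: equivalent characterizations of `𝒢_C`.
For a hereditary class `C` and a graph `G`, the following are equivalent:
(a) `G ∈ 𝒢_C`; (b) for every induced subgraph `H` of `G`, every minimal separator `S`
of `H` satisfies `H[S] ∈ C`; (c) for every induced subgraph `H` of `G`, every minimal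
cutset `K` of `H` satisfies `H[K] ∈ C`. -/
theorem statement_0 (C : GraphClass) (hC : Hereditary C)
    (V : Type) [Finite V] (G : SimpleGraph V) :
    (MemGC C G ↔
        ∀ (s : Set V) (S : Set ↥s), IsMinimalSeparator (G.induce s) S →
          C ↥S ((G.induce s).induce S)) ∧
    ((∀ (s : Set V) (S : Set ↥s), IsMinimalSeparator (G.induce s) S →
          C ↥S ((G.induce s).induce S)) ↔
        ∀ (s : Set V) (K : Set ↥s), IsMinimalCutset (G.induce s) K →
          C ↥K ((G.induce s).induce K)) := by
  refine ⟨⟨fun hG s S hS => ?_, fun hb S hS => ?_⟩,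
    ⟨fun hb s K hK => ?_, fun hc s S hS => ?_⟩⟩
  · obtain ⟨S', hS', hSS'⟩ := hS.exists_subset_of_induce
    exact hC.of_iso (induceInduceIso rfl) (hC.induce_mono hSS' (hG S' hS'))
  · have := hb Set.univ _ (hS.image_iso (induceUnivIso G).symm)
    exact hC.of_iso (induceInduceIso (by simp [Set.image_image])).symm this
  · exact hb s K hK.isMinimalSeparator
  · obtain ⟨U, hSU, hU⟩ := hS.exists_isMinimalCutset_induce
    have := hc _ _ (hU.image_iso (induceInduceIso rfl))
    refine hC.of_iso ((induceInduceIso rfl).trans (induceInduceIso ?_).symm) this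
    simp only [Set.image_image, coe_induceInduceIso]
    rw [← Set.image_image (g := Subtype.val) (f := Subtype.val), Subtype.image_preimage_coe,
      Set.inter_eq_right.2 hSU]

end PaperSep
end

section
/- Let H1 and H2 be graphs such that H1 contains no universal vertex. If 2K1 ∨ H1 is an induced minor of 2K1 ∨ H2, then H1 is an induced minor of H2. -/
open SimpleGraph

namespace PaperSep

variable {V : Type} {W : Type}

section Aux

variable {K : SimpleGraph W}

lemma join_adj_inl_inr (i : Fin 2) (w : W) :
    (join (⊥ : SimpleGraph (Fin 2)) K).Adj (Sum.inl i) (Sum.inr w) := by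
  simp [join, SimpleGraph.fromRel_adj]

lemma join_not_adj_inl_inl (i j : Fin 2) :
    ¬ (join (⊥ : SimpleGraph (Fin 2)) K).Adj (Sum.inl i) (Sum.inl j) := by
  simp [join, SimpleGraph.fromRel_adj]

lemma join_adj_inr_inr (a b : W) :
    (join (⊥ : SimpleGraph (Fin 2)) K).Adj (Sum.inr a) (Sum.inr b) ↔ K.Adj a b := by
  simp only [join, SimpleGraph.fromRel_adj]
  constructor
  · rintro ⟨-, h | h⟩
    · exact h
    · exact h.symm
  · intro h
    exact ⟨by simp [h.ne], Or.inl h⟩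

/-- Any vertex of `join ⊥ K` other than `inl 0` and `inl 1` is adjacent to `inl i`. -/
lemma join_adj_of_ne_inl (i : Fin 2) (y : Fin 2 ⊕ W)
    (h0 : y ≠ Sum.inl 0) (h1 : y ≠ Sum.inl 1) :
    (join (⊥ : SimpleGraph (Fin 2)) K).Adj (Sum.inl i) y := by
  rcases y with a | z
  · exfalso
    fin_cases a <;> simp_all
  · exact join_adj_inl_inr i z

/-- Extraction lemma: a model of `H₁` in `join ⊥ H₂` whose branch sets avoid the
two apex vertices yields a model of `H₁` in `H₂`. -/
lemma extract_model {V W : Type} (H₁ : SimpleGraph V) (H₂ : SimpleGraph W)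
    (Y : V → Set (Fin 2 ⊕ W))
    (hsub : ∀ v, Y v ⊆ Set.range Sum.inr)
    (hne : ∀ v, (Y v).Nonempty)
    (hdisj : ∀ u v, u ≠ v → Disjoint (Y u) (Y v))
    (hconn : ∀ v, ((join (⊥ : SimpleGraph (Fin 2)) H₂).induce (Y v)).Connected)
    (hadj : ∀ u v, u ≠ v → (H₁.Adj u v ↔ ∃ a ∈ Y u, ∃ b ∈ Y v,
        (join (⊥ : SimpleGraph (Fin 2)) H₂).Adj a b)) :
    IsInducedMinor H₁ H₂ := by
  refine ⟨fun v => Sum.inr ⁻¹' Y v, ?_, ?_, ?_, ?_⟩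
  · intro v
    obtain ⟨y, hy⟩ := hne v
    obtain ⟨z, rfl⟩ := hsub v hy
    exact ⟨z, hy⟩
  · intro u v huv
    rw [Set.disjoint_left]
    intro z hzu hzv
    exact (hdisj u v huv).le_bot ⟨hzu, hzv⟩
  · intro v
    -- build an isomorphism
    have hbij : Function.Bijective
        (fun z : ↥(Sum.inr ⁻¹' Y v) =>
          (⟨Sum.inr z.1, z.2⟩ : ↥(Y v))) := by
      constructor
      · rintro ⟨a, ha⟩ ⟨b, hb⟩ hab
        simp only [Subtype.mk.injEq, Sum.inr.injEq] at hab
        exact Subtype.ext hab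
      · rintro ⟨y, hy⟩
        obtain ⟨z, rfl⟩ := hsub v hy
        exact ⟨⟨z, hy⟩, rfl⟩
    let e : (H₂.induce (Sum.inr ⁻¹' Y v)) ≃g
        ((join (⊥ : SimpleGraph (Fin 2)) H₂).induce (Y v)) := by
      refine ⟨Equiv.ofBijective _ hbij, ?_⟩
      rintro ⟨a, ha⟩ ⟨b, hb⟩
      simp only [Equiv.ofBijective_apply, comap_adj, Function.Embedding.coe_subtype]
      exact join_adj_inr_inr a b
    exact (hconn v).map e.symm.toHom e.symm.surjective
  · intro u v huv
    rw [hadj u v huv]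
    constructor
    · rintro ⟨a, ha, b, hb, hab⟩
      obtain ⟨a', rfl⟩ := hsub u ha
      obtain ⟨b', rfl⟩ := hsub v hb
      exact ⟨a', ha, b', hb, (join_adj_inr_inr a' b').mp hab⟩
    · rintro ⟨a, ha, b, hb, hab⟩
      exact ⟨Sum.inr a, ha, Sum.inr b, hb, (join_adj_inr_inr a b).mpr hab⟩

lemma fin2_cases (a i j : Fin 2) (h : i ≠ j) : a = i ∨ a = j := by
  fin_cases a <;> fin_cases i <;> fin_cases j <;> simp_all

end Aux

set_option maxHeartbeats 1000000 in
/-- if `H₁` has no universal vertex and `2K₁ ∨ H₁` is an induced minor of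
`2K₁ ∨ H₂`, then `H₁` is an induced minor of `H₂`. -/
theorem statement_6 (V W : Type) [Finite V] [Finite W]
    (H₁ : SimpleGraph V) (H₂ : SimpleGraph W)
    (huniv : ¬ HasUniversalVertex H₁)
    (h : IsInducedMinor (join (⊥ : SimpleGraph (Fin 2)) H₁)
          (join (⊥ : SimpleGraph (Fin 2)) H₂)) :
    IsInducedMinor H₁ H₂ := by
  classical
  obtain ⟨X, hne, hdisj, hconn, hadj⟩ := h
  have hswap : ∀ (S T : Set (Fin 2 ⊕ W)),
      (∃ a ∈ S, ∃ b ∈ T, (join (⊥ : SimpleGraph (Fin 2)) H₂).Adj a b) →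
      ∃ a ∈ T, ∃ b ∈ S, (join (⊥ : SimpleGraph (Fin 2)) H₂).Adj a b := by
    rintro S T ⟨a, ha, b, hb, hab⟩
    exact ⟨b, hb, a, ha, hab.symm⟩
  by_cases hc : ∃ (i : Fin 2) (v : V), Sum.inl i ∈ X (Sum.inr v)
  · obtain ⟨i, v, hiv⟩ := hc
    rw [HasUniversalVertex] at huniv
    push_neg at huniv
    obtain ⟨u, hu, hvu⟩ := huniv v
    set j : Fin 2 := if i = 0 then 1 else 0 with hjdef
    have hij : i ≠ j := by fin_cases i <;> simp [hjdef]
    have hfin : ∀ (y : Fin 2 ⊕ W), y ≠ Sum.inl i → y ≠ Sum.inl j →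
        ∀ k : Fin 2, y ≠ Sum.inl k := by
      intro y h1 h2 k
      rcases fin2_cases k i j hij with rfl | rfl <;> assumption
    have hne_vu : (Sum.inr v : Fin 2 ⊕ V) ≠ Sum.inr u := by simp [Ne.symm hu]
    have hnoedge_vu : ¬ ∃ a ∈ X (Sum.inr v), ∃ b ∈ X (Sum.inr u),
        (join (⊥ : SimpleGraph (Fin 2)) H₂).Adj a b := by
      intro hex
      have := (hadj _ _ hne_vu).mpr hex
      rw [join_adj_inr_inr] at this
      exact hvu this
    -- X (inr u) consists only of inl j
    have hXu : ∀ y ∈ X (Sum.inr u), y = Sum.inl j := by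
      intro y hy
      by_contra hyj
      have hyi : y ≠ Sum.inl i := by
        rintro rfl
        exact (hdisj _ _ hne_vu).le_bot ⟨hiv, hy⟩
      have hAdjy : (join (⊥ : SimpleGraph (Fin 2)) H₂).Adj (Sum.inl i) y :=
        join_adj_of_ne_inl i y (hfin y hyi hyj 0) (hfin y hyi hyj 1)
      exact hnoedge_vu ⟨_, hiv, y, hy, hAdjy⟩
    have hju : Sum.inl j ∈ X (Sum.inr u) := by
      obtain ⟨y, hy⟩ := hne (Sum.inr u)
      rw [← hXu y hy]; exact hy
    -- branch sets of other vertices avoid the apexes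
    have hXw_sub : ∀ w : V, w ≠ v → w ≠ u → X (Sum.inr w) ⊆ Set.range Sum.inr := by
      intro w hwv hwu y hy
      rcases y with a | z
      · exfalso
        rcases fin2_cases a i j hij with rfl | rfl
        · exact (hdisj (Sum.inr w) (Sum.inr v) (by simp [hwv])).le_bot ⟨hy, hiv⟩
        · exact (hdisj (Sum.inr w) (Sum.inr u) (by simp [hwu])).le_bot ⟨hy, hju⟩
      · exact ⟨z, rfl⟩
    have hA_sub : ∀ k : Fin 2, X (Sum.inl k) ⊆ Set.range Sum.inr := by
      intro k y hy
      rcases y with a | z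
      · exfalso
        rcases fin2_cases a i j hij with rfl | rfl
        · exact (hdisj (Sum.inl k) (Sum.inr v) (by simp)).le_bot ⟨hy, hiv⟩
        · exact (hdisj (Sum.inl k) (Sum.inr u) (by simp)).le_bot ⟨hy, hju⟩
      · exact ⟨z, rfl⟩
    have hAdj_vw : ∀ w : V, w ≠ v → w ≠ u → H₁.Adj v w := by
      intro w hwv hwu
      obtain ⟨y, hy⟩ := hne (Sum.inr w)
      obtain ⟨z, rfl⟩ := hXw_sub w hwv hwu hy
      have h1 := (hadj (Sum.inr v) (Sum.inr w) (by simp [Ne.symm hwv])).mpr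
        ⟨Sum.inl i, hiv, Sum.inr z, hy, join_adj_inl_inr i z⟩
      rwa [join_adj_inr_inr] at h1
    have hAdj_uw : ∀ w : V, w ≠ v → w ≠ u → H₁.Adj u w := by
      intro w hwv hwu
      obtain ⟨y, hy⟩ := hne (Sum.inr w)
      obtain ⟨z, rfl⟩ := hXw_sub w hwv hwu hy
      have h1 := (hadj (Sum.inr u) (Sum.inr w) (by simp [Ne.symm hwu])).mpr
        ⟨Sum.inl j, hju, Sum.inr z, hy, join_adj_inl_inr j z⟩
      rwa [join_adj_inr_inr] at h1
    have hAB : ¬ ∃ a ∈ X (Sum.inl 0), ∃ b ∈ X (Sum.inl 1),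
        (join (⊥ : SimpleGraph (Fin 2)) H₂).Adj a b := by
      intro hex
      have := (hadj (Sum.inl 0) (Sum.inl 1) (by simp)).mpr hex
      exact join_not_adj_inl_inl 0 1 this
    have hedge_A : ∀ w : V, ∀ k : Fin 2, ∃ a ∈ X (Sum.inl k), ∃ b ∈ X (Sum.inr w),
        (join (⊥ : SimpleGraph (Fin 2)) H₂).Adj a b := by
      intro w k
      exact (hadj (Sum.inl k) (Sum.inr w) (by simp)).mp (join_adj_inl_inr k w)
    -- the relabelling map
    set φ : V → Fin 2 ⊕ V := fun w =>
      if w = v then Sum.inl 0 else if w = u then Sum.inl 1 else Sum.inr w with hφdef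
    have hφv : φ v = Sum.inl 0 := by simp [hφdef]
    have hφu : φ u = Sum.inl 1 := by simp [hφdef, hu]
    have hφw : ∀ w, w ≠ v → w ≠ u → φ w = Sum.inr w := by
      intro w hwv hwu; simp [hφdef, hwv, hwu]
    have hφinj : ∀ a b : V, a ≠ b → φ a ≠ φ b := by
      intro a b hab
      by_cases ha1 : a = v
      · rw [ha1, hφv]
        by_cases hb2 : b = u
        · rw [hb2, hφu]; simp
        · have hbv : b ≠ v := by rw [← ha1]; exact Ne.symm hab
          rw [hφw b hbv hb2]; simp
      · by_cases ha2 : a = u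
        · rw [ha2, hφu]
          by_cases hb1 : b = v
          · rw [hb1, hφv]; simp
          · have hbu : b ≠ u := by rw [← ha2]; exact Ne.symm hab
            rw [hφw b hb1 hbu]; simp
        · rw [hφw a ha1 ha2]
          by_cases hb1 : b = v
          · rw [hb1, hφv]; simp
          · by_cases hb2 : b = u
            · rw [hb2, hφu]; simp
            · rw [hφw b hb1 hb2]; simp [hab]
    apply extract_model H₁ H₂ (fun w => X (φ w))
    · intro w
      by_cases hwv : w = v
      · rw [hwv, hφv]; exact hA_sub 0
      · by_cases hwu : w = u
        · rw [hwu, hφu]; exact hA_sub 1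
        · rw [hφw w hwv hwu]; exact hXw_sub w hwv hwu
    · intro w; exact hne _
    · intro a b hab; exact hdisj _ _ (hφinj a b hab)
    · intro w; exact hconn _
    · intro a b hab
      by_cases ha1 : a = v
      · rw [ha1]
        by_cases hb2 : b = u
        · rw [hb2, hφv, hφu]
          exact iff_of_false hvu hAB
        · have hbv : b ≠ v := by rw [← ha1]; exact Ne.symm hab
          rw [hφv, hφw b hbv hb2]
          exact iff_of_true (hAdj_vw b hbv hb2) (hedge_A b 0)
      · by_cases ha2 : a = u
        · rw [ha2]
          by_cases hb1 : b = v
          · rw [hb1, hφu, hφv]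
            refine iff_of_false (fun h => hvu h.symm) (fun hex => hAB (hswap _ _ hex))
          · have hbu : b ≠ u := by rw [← ha2]; exact Ne.symm hab
            rw [hφu, hφw b hb1 hbu]
            exact iff_of_true (hAdj_uw b hb1 hbu) (hedge_A b 1)
        · by_cases hb1 : b = v
          · rw [hb1]
            rw [hφw a ha1 ha2, hφv]
            exact iff_of_true (hAdj_vw a ha1 ha2).symm (hswap _ _ (hedge_A a 0))
          · by_cases hb2 : b = u
            · rw [hb2]
              rw [hφw a ha1 ha2, hφu]
              exact iff_of_true (hAdj_uw a ha1 ha2).symm (hswap _ _ (hedge_A a 1))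
            · rw [hφw a ha1 ha2, hφw b hb1 hb2]
              have := hadj (Sum.inr a) (Sum.inr b) (by simp [hab])
              rwa [join_adj_inr_inr] at this
  · -- no apex is in any branch set of a vertex of `V`
    push_neg at hc
    apply extract_model H₁ H₂ (fun w => X (Sum.inr w))
    · intro w y hy
      rcases y with a | z
      · exact absurd hy (hc a w)
      · exact ⟨z, rfl⟩
    · intro w; exact hne _
    · intro a b hab; exact hdisj _ _ (by simp [hab])
    · intro w; exact hconn _
    · intro a b hab
      have := hadj (Sum.inr a) (Sum.inr b) (by simp [hab])
      rwa [join_adj_inr_inr] at this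

end PaperSep
end

section
/- Let C be a class of graphs that is closed under the addition of universal vertices. Then no graph in M_C contains a universal vertex. Moreover, for any two nonisomorphic graphs H1, H2 ∈ M_C, the graphs 2K1 ∨ H1 and 2K1 ∨ H2 are incomparable with respect to the induced minor relation (neither is an induced minor of the other). -/
/-!
A universal vertex `v` of `G ∈ ℳ_C` is impossible: `G - v` is a proper induced minor, hence in
`C`, and `G` arises from it by adding a universal vertex.

Since `ℳ_C` is an antichain for the induced minor order, the second part reduces to: if `H₁`
has no universal vertex and `2K₁ ∨ H₁` is an induced minor of `2K₁ ∨ H₂`, then `H₁` is an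
induced minor of `H₂`. Take a model and let `a, b` be the two apexes of `2K₁ ∨ H₂`. If no branch
set of a vertex of `H₁` contains an apex, the model restricts to `H₂`. Otherwise say `a` lies in
the branch set of `u ∈ H₁`; the branch set of a non-neighbour `u'` of `u` lies in the
non-neighbourhood of `a`, so it contains `b`. Every other vertex is then adjacent to both `u`
and `u'`, since its branch set would otherwise also contain an apex. So `u, u'` can play the
role of the two vertices of `2K₁`, and the branch sets of the remaining vertices restrict to
`H₂`.
-/

open SimpleGraph

namespace PaperSep

variable {V : Type} {W : Type}

section Join

variable {ι : Type} {G : SimpleGraph ι} {H : SimpleGraph V}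

@[simp] lemma join_adj_inl_inl {i j : ι} : (join G H).Adj (Sum.inl i) (Sum.inl j) ↔ G.Adj i j := by
  simpa [join, G.adj_comm] using G.ne_of_adj

@[simp] lemma join_adj_inr_inr_s7 {v w : V} : (join G H).Adj (Sum.inr v) (Sum.inr w) ↔ H.Adj v w := by
  simpa [join, H.adj_comm] using H.ne_of_adj

@[simp] lemma join_adj_inl_inr_s7 {i : ι} {v : V} : (join G H).Adj (Sum.inl i) (Sum.inr v) := by
  simp [join]

@[simp] lemma join_adj_inr_inl {i : ι} {v : V} : (join G H).Adj (Sum.inr v) (Sum.inl i) := by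
  simp [join]

lemma exists_eq_inl_of_not_adj_inl {i : ι} {x : ι ⊕ V} (h : ¬ (join G H).Adj (Sum.inl i) x) :
    ∃ j, x = Sum.inl j := by
  cases x with
  | inl j => exact ⟨j, rfl⟩
  | inr v => exact absurd join_adj_inl_inr_s7 h

def joinInr : H ↪g join G H where
  toEmbedding := Function.Embedding.inr
  map_rel_iff' := join_adj_inr_inr_s7

end Join

section InducedMinor

variable {U : Type} {G : SimpleGraph V} {H : SimpleGraph W} {X : W → Set V}

noncomputable def _root_.SimpleGraph.Embedding.induceImageIso {G' : SimpleGraph U} (φ : G' ↪g G)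
    (T : Set U) : G'.induce T ≃g G.induce (φ '' T) where
  toEquiv := Equiv.Set.image φ T φ.injective
  map_rel_iff' := φ.map_adj_iff

lemma isIMModel_singleton (G : SimpleGraph V) : IsIMModel G G (fun v => {v}) := by
  refine ⟨fun v => Set.singleton_nonempty v, fun u v huv => ?_, fun v => ?_, fun u v _ => ?_⟩
  · exact Set.disjoint_singleton.mpr huv
  · rw [induce_singleton_eq_top]
    exact connected_top
  · simp

lemma IsIMModel.eq_of_mem (hX : IsIMModel G H X) {u w : W} {x : V} (hu : x ∈ X u)
    (hw : x ∈ X w) : u = w := by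
  by_contra huw
  exact Set.disjoint_left.mp (hX.2.1 u w huw) hu hw

lemma IsIMModel.comp {H' : SimpleGraph U} (hX : IsIMModel G H X) (f : H' ↪g H) :
    IsIMModel G H' (X ∘ f) := by
  obtain ⟨hne, hdisj, hconn, hadj⟩ := hX
  refine ⟨fun u => hne (f u), fun u v huv => hdisj _ _ (f.injective.ne huv), fun u => hconn (f u),
    fun u v huv => ?_⟩
  rw [← f.map_adj_iff]
  exact hadj _ _ (f.injective.ne huv)

lemma IsIMModel.preimage {G' : SimpleGraph U} (hX : IsIMModel G H X) (φ : G' ↪g G)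
    (hrange : ∀ w, X w ⊆ Set.range φ) : IsIMModel G' H (fun w => φ ⁻¹' X w) := by
  obtain ⟨hne, hdisj, hconn, hadj⟩ := hX
  refine ⟨fun w => ?_, fun u w huw => (hdisj u w huw).preimage φ, fun w => ?_, fun u w huw => ?_⟩
  · obtain ⟨x, hx⟩ := hne w
    obtain ⟨y, rfl⟩ := hrange w hx
    exact ⟨y, hx⟩
  · rw [(φ.induceImageIso _).connected_iff, Set.image_preimage_eq_of_subset (hrange w)]
    exact hconn w
  · rw [hadj u w huw]
    constructor
    · rintro ⟨a, ha, b, hb, hab⟩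
      obtain ⟨a, rfl⟩ := hrange u ha
      obtain ⟨b, rfl⟩ := hrange w hb
      exact ⟨a, ha, b, hb, φ.map_adj_iff.mp hab⟩
    · rintro ⟨a, ha, b, hb, hab⟩
      exact ⟨φ a, ha, φ b, hb, φ.map_adj_iff.mpr hab⟩

lemma _root_.SimpleGraph.Embedding.isInducedMinor (f : H ↪g G) : IsInducedMinor H G :=
  ⟨_, (isIMModel_singleton G).comp f⟩

lemma MemMC.not_isInducedMinor {C : GraphClass} [Finite V] [Finite W] (hG : MemMC C G)
    (hH : MemMC C H) (hiso : IsEmpty (G ≃g H)) : ¬ IsInducedMinor G H :=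
  fun h => hG.1 (hH.2 V G h hiso)

end InducedMinor

section UniversalVertex

variable {G : SimpleGraph V}

noncomputable def joinIsoOfUniversal [DecidableEq V] {v : V} (hv : ∀ w, w ≠ v → G.Adj v w) :
    join (⊥ : SimpleGraph (Fin 1)) (G.induce {v}ᶜ) ≃g G where
  toEquiv :=
    (Equiv.sumCongr (Equiv.ofUnique (Fin 1) ({v} : Set V)) (Equiv.refl _)).trans
      (Equiv.Set.sumCompl {v})
  map_rel_iff' := by
    rintro (i | ⟨a, ha⟩) (j | ⟨b, hb⟩)
    · simp
    · simpa using hv b hb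
    · simpa using (hv a ha).symm
    · simp

lemma MemMC.not_hasUniversalVertex {C : GraphClass} (hU : UnivAddClosed C) [Finite V]
    (hG : MemMC C G) : ¬ HasUniversalVertex G := by
  classical
  rintro ⟨v, hv⟩
  have hsmaller : IsEmpty (G.induce {v}ᶜ ≃g G) :=
    ⟨fun e => (Nat.card_congr e.toEquiv).not_lt (Finite.card_subtype_lt (x := v) (by simp))⟩
  have hC : C _ (G.induce {v}ᶜ) := hG.2 _ _ (Embedding.induce _).isInducedMinor hsmaller
  exact hG.1 (hU _ _ V G hC ⟨(joinIsoOfUniversal hv).symm⟩)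

end UniversalVertex

section DoubleCone

variable {H₁ : SimpleGraph V} {H₂ : SimpleGraph W}

lemma subset_range_inr_of_forall_inl_notMem {α β : Type} {s : Set (α ⊕ β)}
    (h : ∀ a, Sum.inl a ∉ s) : s ⊆ Set.range Sum.inr := by
  rintro (a | b) hx
  · exact absurd hx (h a)
  · exact ⟨b, rfl⟩

lemma exists_embedding_join_bot_two {u u' : V} (hne : u ≠ u') (hnadj : ¬ H₁.Adj u u')
    (hu : ∀ v, v ≠ u → v ≠ u' → H₁.Adj u v) (hu' : ∀ v, v ≠ u → v ≠ u' → H₁.Adj u' v) :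
    ∃ f : H₁ ↪g join (⊥ : SimpleGraph (Fin 2)) H₁,
      Sum.inr u ∉ Set.range f ∧ Sum.inr u' ∉ Set.range f := by
  classical
  let f : V → Fin 2 ⊕ V := fun v => if v = u then .inl 0 else if v = u' then .inl 1 else .inr v
  have hf : ∀ a b, (join ⊥ H₁).Adj (f a) (f b) ↔ H₁.Adj a b := by
    intro a b
    simp only [f]
    split_ifs <;> subst_vars <;> simp_all [H₁.adj_comm]
    all_goals exact H₁.adj_symm (by simp_all)
  have hinj : Function.Injective f := by
    intro a b hab
    simp only [f] at hab
    split_ifs at hab <;> simp_all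
  have hf_ne : ∀ v, f v ≠ .inr u ∧ f v ≠ .inr u' := by
    intro v
    simp only [f]
    split_ifs <;> simp_all
  exact ⟨⟨⟨f, hinj⟩, hf _ _⟩, fun ⟨v, hv⟩ => (hf_ne v).1 hv, fun ⟨v, hv⟩ => (hf_ne v).2 hv⟩

lemma IsIMModel.exists_inl_mem_of_not_adj {ι U : Type} {H : SimpleGraph U}
    {X : U → Set (ι ⊕ W)} (hX : IsIMModel (join (⊥ : SimpleGraph ι) H₂) H X)
    {z z' : U} (hzz' : z ≠ z') (hnadj : ¬ H.Adj z z') {i : ι} (hi : Sum.inl i ∈ X z) :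
    ∃ j ≠ i, Sum.inl j ∈ X z' := by
  obtain ⟨y, hy⟩ := hX.1 z'
  have hy_nadj : ¬ (join ⊥ H₂).Adj (Sum.inl i) y :=
    fun h => hnadj ((hX.2.2.2 z z' hzz').mpr ⟨_, hi, y, hy, h⟩)
  obtain ⟨j, rfl⟩ := exists_eq_inl_of_not_adj_inl hy_nadj
  refine ⟨j, ?_, hy⟩
  rintro rfl
  exact hzz' (hX.eq_of_mem hi hy)

lemma IsIMModel.adj_of_inl_mem {X : Fin 2 ⊕ V → Set (Fin 2 ⊕ W)}
    (hX : IsIMModel (join (⊥ : SimpleGraph (Fin 2)) H₂) (join (⊥ : SimpleGraph (Fin 2)) H₁) X)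
    {u u' v : V} {i j : Fin 2} (hij : i ≠ j) (hi : Sum.inl i ∈ X (.inr u))
    (hj : Sum.inl j ∈ X (.inr u')) (hvu : v ≠ u) (hvu' : v ≠ u') : H₁.Adj u v := by
  by_contra huv
  obtain ⟨k, hki, hk⟩ :=
    hX.exists_inl_mem_of_not_adj (z' := .inr v) (by simpa using hvu.symm) (by simpa using huv) hi
  obtain rfl : k = j := by omega
  exact hvu' (Sum.inr_injective (hX.eq_of_mem hk hj))

lemma isInducedMinor_of_join_bot_two (hnu : ¬ HasUniversalVertex H₁)
    (h : IsInducedMinor (join (⊥ : SimpleGraph (Fin 2)) H₁) (join (⊥ : SimpleGraph (Fin 2)) H₂)) :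
    IsInducedMinor H₁ H₂ := by
  obtain ⟨X, hX⟩ := h
  suffices ∃ f : H₁ ↪g join (⊥ : SimpleGraph (Fin 2)) H₁, ∀ v, X (f v) ⊆ Set.range Sum.inr by
    obtain ⟨f, hf⟩ := this
    exact ⟨_, (hX.comp f).preimage joinInr hf⟩
  by_cases hapex : ∃ u i, Sum.inl i ∈ X (.inr u)
  · obtain ⟨u, i, hi⟩ := hapex
    obtain ⟨u', hu'u, hnadj⟩ : ∃ u', u' ≠ u ∧ ¬ H₁.Adj u u' := by
      by_contra! h
      exact hnu ⟨u, h⟩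
    obtain ⟨j, hji, hj⟩ :=
      hX.exists_inl_mem_of_not_adj (z := .inr u) (z' := .inr u') (by simpa using hu'u.symm)
        (by simpa using hnadj) hi
    obtain ⟨f, hfu, hfu'⟩ := exists_embedding_join_bot_two hu'u.symm hnadj
      (fun v hvu hvu' => hX.adj_of_inl_mem hji.symm hi hj hvu hvu')
      (fun v hvu hvu' => hX.adj_of_inl_mem hji hj hi hvu' hvu)
    refine ⟨f, fun v => subset_range_inr_of_forall_inl_notMem fun k hk => ?_⟩
    obtain rfl | rfl : k = i ∨ k = j := by omega
    · exact hfu ⟨v, hX.eq_of_mem hk hi⟩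
    · exact hfu' ⟨v, hX.eq_of_mem hk hj⟩
  · push Not at hapex
    exact ⟨joinInr, fun v => subset_range_inr_of_forall_inl_notMem (hapex v)⟩

end DoubleCone

/-- if `C` is closed under the addition of universal vertices, then no
graph in `ℳ_C` has a universal vertex, and for nonisomorphic `H₁, H₂ ∈ ℳ_C` the graphs
`2K₁ ∨ H₁` and `2K₁ ∨ H₂` are incomparable under the induced minor relation. -/
theorem statement_7 (C : GraphClass) (hU : UnivAddClosed C) :
    (∀ (V : Type) [Finite V] (G : SimpleGraph V), MemMC C G → ¬ HasUniversalVertex G) ∧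
    (∀ (V : Type) [Finite V] (H₁ : SimpleGraph V)
       (W : Type) [Finite W] (H₂ : SimpleGraph W),
      MemMC C H₁ → MemMC C H₂ → IsEmpty (H₁ ≃g H₂) →
      ¬ IsInducedMinor (join (⊥ : SimpleGraph (Fin 2)) H₁)
          (join (⊥ : SimpleGraph (Fin 2)) H₂) ∧
      ¬ IsInducedMinor (join (⊥ : SimpleGraph (Fin 2)) H₂)
          (join (⊥ : SimpleGraph (Fin 2)) H₁)) := by
  refine ⟨fun V _ G hG => hG.not_hasUniversalVertex hU,
    fun V _ H₁ W _ H₂ h₁ h₂ hiso => ⟨fun h => ?_, fun h => ?_⟩⟩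
  · exact h₁.not_isInducedMinor h₂ hiso
      (isInducedMinor_of_join_bot_two (h₁.not_hasUniversalVertex hU) h)
  · exact h₂.not_isInducedMinor h₁ ⟨fun e => hiso.false e.symm⟩
      (isInducedMinor_of_join_bot_two (h₂.not_hasUniversalVertex hU) h)

end PaperSep
end
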